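/- arXiv:1802.03273 — 5 statements merged into one kernel-verified Lean document; each statement's English description precedes it below -/
import Mathlib

section
/- Let T > 0 and let s > 0 satisfy (2/(3π)) s^{3/2} > 27. Then ∫_{(2/(3π)) s^{3/2}}^{∞} exp( T^{1/3} ( s − ((3π/2) z)^{2/3} ) ) dz ≤ √(2/π) s^{3/4} + 4/(π T). -/
open Real MeasureTheory Set

/-! Put `a = (2/(3π)) s^{3/2}` and `L = √(2/π) s^{3/4}`. On `(a, a + L]` the integrand is at most
`1`. Beyond `a + L`, write `s = r⁴` and `(3π/2) z = w³`: the bracket in the exponent is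
`r⁴ - w² ≤ -(w³ - r⁶)^{1/3} = -((3π/2)(z - a))^{1/3}`, a polynomial inequality that holds as soon as
`w³ - r⁶ ≥ (7/2) r³`, which the choice of `L` guarantees since `(3π/2) L ≥ (7/2) s^{3/4}`.
The remaining tail `exp (-c (z - a)^{1/3})`, with `c³ = (3π/2) T`, integrates to `6/c³ = 4/(πT)`. -/

lemma cube_sub_le_sq_sub_cube {r w : ℝ} (hr : 2 ≤ r) (hrw : r ^ 2 ≤ w)
    (h : 7 / 2 * r ^ 3 ≤ w ^ 3 - r ^ 6) : w ^ 3 - r ^ 6 ≤ (w ^ 2 - r ^ 4) ^ 3 := by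
  set u := w ^ 2 - r ^ 4
  have hr4 : 0 < r ^ 4 := by positivity
  have hw : 0 ≤ w := le_trans (by positivity) hrw
  have hu0 : 0 ≤ u := by nlinarith
  have hcube : w ^ 3 - r ^ 6 ≤ 3 / 2 * w * u := by
    nlinarith [mul_nonneg (sq_nonneg (w - r ^ 2)) (by positivity : 0 ≤ w + 2 * r ^ 2)]
  suffices 3 / 2 * w ≤ u ^ 2 by nlinarith [mul_le_mul_of_nonneg_left this hu0]
  rcases le_or_gt (w ^ 2) (2 * r ^ 4) with hw2 | hw2
  · have hwu : 7 / 3 * r ^ 3 ≤ w * u := by nlinarith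
    have hwu_sq : 49 / 9 * r ^ 6 ≤ w ^ 2 * u ^ 2 := by
      nlinarith [mul_le_mul hwu hwu (by positivity) (by positivity)]
    have hu_sq : 49 / 18 * r ^ 2 ≤ u ^ 2 := by
      have : r ^ 4 * (49 / 18 * r ^ 2) ≤ r ^ 4 * u ^ 2 := by nlinarith
      exact le_of_mul_le_mul_left this hr4
    have hsq : (3 / 2 * w) ^ 2 ≤ (u ^ 2) ^ 2 := by nlinarith
    exact (pow_le_pow_iff_left₀ (by positivity) (by positivity) two_ne_zero).mp hsq
  · have hw4 : 4 ≤ w := by nlinarith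
    have hu2w : 2 * w ≤ u := by nlinarith
    nlinarith

lemma rpow_one_third_sub_le_rpow_two_thirds_sub {s y : ℝ} (hs : 16 ≤ s)
    (hy : s ^ ((3 : ℝ) / 2) + 7 / 2 * s ^ ((3 : ℝ) / 4) ≤ y) :
    (y - s ^ ((3 : ℝ) / 2)) ^ ((1 : ℝ) / 3) ≤ y ^ ((2 : ℝ) / 3) - s := by
  have hs0 : 0 ≤ s := by linarith
  have hy0 : 0 ≤ y := le_trans (by positivity) hy
  set r := s ^ ((1 : ℝ) / 4) with hr
  set w := y ^ ((1 : ℝ) / 3) with hw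
  have hpow_r (n : ℕ) : s ^ ((n : ℝ) / 4) = r ^ n := by
    rw [hr, ← rpow_mul_natCast hs0]; ring_nf
  have hpow_w (n : ℕ) : y ^ ((n : ℝ) / 3) = w ^ n := by
    rw [hw, ← rpow_mul_natCast hy0]; ring_nf
  have hs4 : s = r ^ 4 := by rw [← hpow_r 4]; norm_num
  have hs6 : s ^ ((3 : ℝ) / 2) = r ^ 6 := by rw [← hpow_r 6]; norm_num
  have hs3 : s ^ ((3 : ℝ) / 4) = r ^ 3 := by exact_mod_cast hpow_r 3
  have hy3 : y = w ^ 3 := by rw [← hpow_w 3]; norm_num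
  have hy2 : y ^ ((2 : ℝ) / 3) = w ^ 2 := by exact_mod_cast hpow_w 2
  have hr2 : 2 ≤ r := by
    calc (2 : ℝ) = 16 ^ ((1 : ℝ) / 4) := by norm_num
      _ ≤ r := rpow_le_rpow (by norm_num) hs (by norm_num)
  rw [hs6, hs3, hy3] at hy
  have hrw : r ^ 2 ≤ w :=
    (pow_le_pow_iff_left₀ (by positivity) (by positivity) three_ne_zero).mp (by nlinarith)
  have hkey := cube_sub_le_sq_sub_cube hr2 hrw (by linarith)
  rw [hy2, hs6, hy3, hs4]
  calc (w ^ 3 - r ^ 6) ^ ((1 : ℝ) / 3) ≤ ((w ^ 2 - r ^ 4) ^ 3) ^ ((1 : ℝ) / 3) :=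
        rpow_le_rpow (by nlinarith [pow_pos (by linarith : 0 < r) 3]) hkey (by norm_num)
    _ = w ^ 2 - r ^ 4 := by
        rw [← rpow_natCast, ← rpow_mul (by nlinarith)]; norm_num

lemma rpow_two_thirds_sub_nonneg {s y : ℝ} (hs : 0 ≤ s) (hy : s ^ ((3 : ℝ) / 2) ≤ y) :
    0 ≤ y ^ ((2 : ℝ) / 3) - s := by
  have hy0 : 0 ≤ y := le_trans (by positivity) hy
  rw [sub_nonneg, ← rpow_le_rpow_iff hs (by positivity) (by norm_num : (0 : ℝ) < 3 / 2),
    ← rpow_mul hy0]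
  norm_num [hy]

section Translation

variable {E : Type*} [NormedAddCommGroup E] (f : ℝ → E) (a : ℝ)

lemma integrableOn_Ioi_comp_sub_iff :
    IntegrableOn (fun x ↦ f (x - a)) (Ioi a) ↔ IntegrableOn f (Ioi 0) := by
  simpa [Function.comp_def] using (measurePreserving_sub_right volume a).integrableOn_comp_preimage
    (measurableEmbedding_subRight a) (f := f) (s := Ioi 0)

lemma setIntegral_Ioi_comp_sub [NormedSpace ℝ E] :
    ∫ x in Ioi a, f (x - a) = ∫ y in Ioi 0, f y := by
  simpa using (measurePreserving_sub_right volume a).setIntegral_preimage_emb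
    (measurableEmbedding_subRight a) f (Ioi 0)

end Translation

lemma integrableOn_exp_neg_mul_rpow {p c : ℝ} (hp : 0 < p) (hc : 0 < c) :
    IntegrableOn (fun y ↦ exp (-c * y ^ p)) (Ioi 0) :=
  -- a non-integrable function has Bochner integral `0`, and this one is known to be positive
  Integrable.of_integral_ne_zero <| by
    rw [integral_exp_neg_mul_rpow hp hc]
    exact (mul_pos (rpow_pos_of_pos hc _) (Gamma_pos_of_pos (by positivity))).ne'

lemma integral_exp_neg_mul_rpow_one_third {c : ℝ} (hc : 0 < c) :
    ∫ y in Ioi 0, exp (-c * y ^ ((1 : ℝ) / 3)) = 6 / c ^ 3 := by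
  rw [integral_exp_neg_mul_rpow (by norm_num) hc,
    show (1 : ℝ) / (1 / 3) + 1 = (3 : ℕ) + 1 by norm_num, Gamma_nat_eq_factorial,
    show (-1 : ℝ) / (1 / 3) = -(3 : ℕ) by norm_num, rpow_neg hc.le, rpow_natCast]
  norm_num [Nat.factorial]
  ring

lemma exp_le_indicator_add_exp_neg_rpow {T s k a L z : ℝ} (hT : 0 ≤ T) (hs : 16 ≤ s) (hk : 0 < k)
    (ha : k * a = s ^ ((3 : ℝ) / 2)) (hL : 7 / 2 * s ^ ((3 : ℝ) / 4) ≤ k * L) (hz : a < z) :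
    exp (T ^ ((1 : ℝ) / 3) * (s - (k * z) ^ ((2 : ℝ) / 3))) ≤
      (Ioc a (a + L)).indicator 1 z + exp (-(T * k) ^ ((1 : ℝ) / 3) * (z - a) ^ ((1 : ℝ) / 3)) := by
  by_cases hzL : z ≤ a + L
  · have hsz : s ^ ((3 : ℝ) / 2) ≤ k * z := by rw [← ha]; gcongr
    have hexp : exp (T ^ ((1 : ℝ) / 3) * (s - (k * z) ^ ((2 : ℝ) / 3))) ≤ 1 :=
      exp_le_one_iff.2 <| mul_nonpos_of_nonneg_of_nonpos (by positivity) <| by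
        linarith [rpow_two_thirds_sub_nonneg (by linarith) hsz]
    rw [indicator_of_mem (show z ∈ Ioc a (a + L) from ⟨hz, hzL⟩), Pi.one_apply]
    linarith [exp_pos (-(T * k) ^ ((1 : ℝ) / 3) * (z - a) ^ ((1 : ℝ) / 3))]
  · have hsz : s ^ ((3 : ℝ) / 2) + 7 / 2 * s ^ ((3 : ℝ) / 4) ≤ k * z := by
      have : k * (a + L) ≤ k * z := by gcongr; linarith
      linarith
    have hkz : (T * k) ^ ((1 : ℝ) / 3) * (z - a) ^ ((1 : ℝ) / 3) =
        T ^ ((1 : ℝ) / 3) * (k * z - s ^ ((3 : ℝ) / 2)) ^ ((1 : ℝ) / 3) := by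
      rw [← ha, ← mul_sub, mul_rpow hT hk.le, mul_rpow hk.le (by linarith), mul_assoc]
    have := mul_le_mul_of_nonneg_left (rpow_one_third_sub_le_rpow_two_thirds_sub hs hsz)
      (rpow_nonneg hT ((1 : ℝ) / 3))
    rw [indicator_of_notMem (fun h ↦ hzL h.2), zero_add, exp_le_exp, neg_mul, hkz]
    linarith

lemma setIntegral_Ioi_le_of_le_indicator_add_exp_neg_rpow {f : ℝ → ℝ} {a L c : ℝ}
    (hf0 : ∀ z, 0 ≤ f z) (hL : 0 ≤ L) (hc : 0 < c)
    (hf : ∀ z ∈ Ioi a, f z ≤ (Ioc a (a + L)).indicator 1 z + exp (-c * (z - a) ^ ((1 : ℝ) / 3))) :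
    ∫ z in Ioi a, f z ≤ L + 6 / c ^ 3 := by
  have hind : IntegrableOn ((Ioc a (a + L)).indicator (1 : ℝ → ℝ)) (Ioi a) :=
    ((integrable_indicator_iff measurableSet_Ioc).2
      (integrableOn_const measure_Ioc_lt_top.ne)).integrableOn
  have htail := (integrableOn_Ioi_comp_sub_iff (fun y ↦ exp (-c * y ^ ((1 : ℝ) / 3))) a).2
    (integrableOn_exp_neg_mul_rpow (by norm_num) hc)
  calc ∫ z in Ioi a, f z
      ≤ ∫ z in Ioi a, ((Ioc a (a + L)).indicator 1 z + exp (-c * (z - a) ^ ((1 : ℝ) / 3))) :=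
        integral_mono_of_nonneg (.of_forall hf0) (hind.add htail)
          ((ae_restrict_mem measurableSet_Ioi).mono hf)
    _ = L + 6 / c ^ 3 := by
        rw [integral_add hind htail,
          setIntegral_Ioi_comp_sub (fun y ↦ exp (-c * y ^ ((1 : ℝ) / 3))),
          integral_exp_neg_mul_rpow_one_third hc, integral_indicator_one measurableSet_Ioc,
          measureReal_restrict_apply measurableSet_Ioc,
          inter_eq_self_of_subset_left Ioc_subset_Ioi_self, volume_real_Ioc, add_sub_cancel_left,
          max_eq_left hL]

lemma seven_halves_le_mul_sqrt_two_div_pi : 7 / 2 ≤ 3 * π / 2 * √(2 / π) := by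
  have h : 7 / (3 * π) ≤ √(2 / π) := by
    rw [le_sqrt (by positivity) (by positivity), div_pow, div_le_div_iff₀ (by positivity) pi_pos]
    nlinarith [pi_gt_three]
  calc 7 / 2 = 3 * π / 2 * (7 / (3 * π)) := by field_simp
    _ ≤ 3 * π / 2 * √(2 / π) := by gcongr

/-- for `T > 0` and `s > 0` with `(2/(3π)) s^(3/2) > 27`,
`∫_{(2/(3π)) s^(3/2)}^∞ exp(T^(1/3)(s − ((3π/2) z)^(2/3))) dz ≤ √(2/π) s^(3/4) + 4/(πT)`. -/
theorem tail_integral_bound (T s : ℝ) (hT : 0 < T) (hs : 0 < s)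
    (hbig : 27 < (2 / (3 * π)) * s ^ ((3 : ℝ) / 2)) :
    (∫ z in Set.Ici ((2 / (3 * π)) * s ^ ((3 : ℝ) / 2)),
        Real.exp (T ^ ((1 : ℝ) / 3) * (s - ((3 * π / 2) * z) ^ ((2 : ℝ) / 3)))) ≤
      Real.sqrt (2 / π) * s ^ ((3 : ℝ) / 4) + 4 / (π * T) := by
  have ha : 3 * π / 2 * (2 / (3 * π) * s ^ ((3 : ℝ) / 2)) = s ^ ((3 : ℝ) / 2) := by field_simp
  have hs16 : 16 ≤ s := by
    by_contra! h
    have : s ^ ((3 : ℝ) / 2) < 16 ^ ((3 : ℝ) / 2) := rpow_lt_rpow hs.le h (by norm_num)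
    norm_num at this
    nlinarith [pi_gt_three]
  have hL : 7 / 2 * s ^ ((3 : ℝ) / 4) ≤ 3 * π / 2 * (√(2 / π) * s ^ ((3 : ℝ) / 4)) := by
    rw [← mul_assoc]; gcongr; exact seven_halves_le_mul_sqrt_two_div_pi
  have hc : ((T * (3 * π / 2)) ^ ((1 : ℝ) / 3)) ^ 3 = T * (3 * π / 2) := by
    rw [← rpow_natCast, ← rpow_mul (by positivity)]; norm_num
  rw [integral_Ici_eq_integral_Ioi]
  refine (setIntegral_Ioi_le_of_le_indicator_add_exp_neg_rpow (fun _ ↦ (exp_pos _).le)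
    (by positivity) (by positivity) fun z hz ↦
      exp_le_indicator_add_exp_neg_rpow hT.le hs16 (by positivity) ha hL hz).trans_eq ?_
  rw [hc]
  field_simp
  ring
end

section
/- Fix ε ∈ (0, 1/3) and a nonnegative integer θ₁. There exists S₀ = S₀(ε, θ₁) > 0 such that for all s ≥ S₀, setting θ₂ := ⌈ 2 s^{3/2}/(3π) + 1/2 ⌉, one has ∑_{k=θ₁+1}^{θ₂−1} ( s − ((3π/2) k)^{2/3} ) ≥ (4/(15π)) s^{5/2} (1 − 3ε) − (θ₁ + 1) s. -/
open Real

set_option maxHeartbeats 2000000 in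
/-- eq. MidSecLowerBound: fix `ε ∈ (0,1/3)` and `θ₁ : ℕ`. There exists
`S₀ > 0` such that for all `s ≥ S₀`, with `θ₂ := ⌈2 s^(3/2)/(3π) + 1/2⌉`, one has
`∑_{k=θ₁+1}^{θ₂−1} (s − ((3π/2) k)^(2/3)) ≥ (4/(15π)) s^(5/2) (1 − 3ε) − (θ₁+1) s`. -/
theorem mid_section_lower_bound (ε : ℝ) (hε : ε ∈ Set.Ioo (0 : ℝ) (1 / 3)) (θ₁ : ℕ) :
    ∃ S₀ > (0 : ℝ), ∀ s ≥ S₀,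
      (4 / (15 * π)) * s ^ ((5 : ℝ) / 2) * (1 - 3 * ε) - ((θ₁ : ℝ) + 1) * s ≤
        ∑ k ∈ Finset.Icc (θ₁ + 1) (⌈2 * s ^ ((3 : ℝ) / 2) / (3 * π) + 1 / 2⌉₊ - 1),
          (s - ((3 * π / 2) * (k : ℝ)) ^ ((2 : ℝ) / 3)) := by
  obtain ⟨hε0, hε3⟩ := hε
  have hπ : (0:ℝ) < π := pi_pos
  have hπ' : π ≠ 0 := hπ.ne'
  refine ⟨1 + 27*π/(8*ε) + 3*π*(θ₁+2), by positivity, fun s hs => ?_⟩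
  have hA : (0:ℝ) ≤ 27*π/(8*ε) := by positivity
  have hB : (0:ℝ) ≤ 3*π*(θ₁+2) := by positivity
  have hs1 : (1:ℝ) ≤ s := by linarith
  have hs0 : (0:ℝ) < s := by linarith
  set N : ℝ := 2 * s ^ ((3:ℝ)/2) / (3*π) with hN
  set θ₂ : ℕ := ⌈N + 1/2⌉₊ with hθ₂
  have hsle : s ≤ s ^ ((3:ℝ)/2) := by
    calc s = s ^ (1:ℝ) := (rpow_one s).symm
    _ ≤ s ^ ((3:ℝ)/2) := rpow_le_rpow_of_exponent_le hs1 (by norm_num)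
  have hsA : 27*π/(8*ε) ≤ s := by linarith
  rw [div_le_iff₀ (by positivity)] at hsA
  -- N is big
  have hNbig : 9 ≤ 4*ε*N := by
    have h8 : 27*π ≤ 8*ε*s^((3:ℝ)/2) := by
      nlinarith [mul_le_mul_of_nonneg_left hsle (by positivity : (0:ℝ) ≤ 8*ε)]
    rw [hN, show 4*ε*(2*s^((3:ℝ)/2)/(3*π)) = (8*ε*s^((3:ℝ)/2))/(3*π) from by ring,
      le_div_iff₀ (by positivity)]
    linarith
  have hNθ : (θ₁:ℝ) + 2 ≤ N := by
    rw [hN, le_div_iff₀ (by positivity)]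
    have h3 : 3*π*((θ₁:ℝ)+2) ≤ s := by linarith
    nlinarith
  have hN0 : (0:ℝ) < N := by positivity
  -- key algebraic facts about N
  have hcN : (3*π/2) ^ ((2:ℝ)/3) * N ^ ((2:ℝ)/3) = s := by
    rw [hN, ← mul_rpow (by positivity) (by positivity)]
    have h : 3*π/2 * (2 * s ^ ((3:ℝ)/2) / (3*π)) = s ^ ((3:ℝ)/2) := by
      field_simp
    rw [h, ← rpow_mul hs0.le]
    norm_num
  have hN53 : N ^ ((5:ℝ)/3) = N ^ ((2:ℝ)/3) * N := by
    have h := rpow_add hN0 (2/3) 1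
    rw [rpow_one] at h
    norm_num at h
    exact h
  have hmul : s ^ ((5:ℝ)/2) = s * s ^ ((3:ℝ)/2) := by
    have h := rpow_add hs0 1 (3/2)
    rw [rpow_one] at h
    norm_num at h
    exact h
  have hsN : s * N = 2/(3*π) * s ^ ((5:ℝ)/2) := by
    rw [hN, hmul]; field_simp
  -- bounds on θ₂
  have hTlow : N + 1/2 ≤ (θ₂:ℝ) := Nat.le_ceil _
  have hThigh : (θ₂:ℝ) < N + 3/2 := by
    have := Nat.ceil_lt_add_one (by positivity : (0:ℝ) ≤ N + 1/2)
    rw [hθ₂]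
    linarith
  have hTθ₁ : θ₁ + 2 ≤ θ₂ := by
    have h : ((θ₁:ℝ) + 2) ≤ (θ₂:ℝ) := by linarith
    exact_mod_cast h
  have hθ₂1 : 1 ≤ θ₂ := by omega
  clear_value θ₂
  clear hθ₂
  clear_value N
  clear hN
  -- rewrite sum as Ico
  have hIcc : Finset.Icc (θ₁+1) (θ₂ - 1) = Finset.Ico (θ₁+1) θ₂ := by
    rw [← Finset.Ico_add_one_right_eq_Icc]
    congr 1
    omega
  rw [hIcc]
  set f : ℝ → ℝ := fun x => s - ((3*π/2)*x) ^ ((2:ℝ)/3) with hf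
  have hanti : AntitoneOn f (Set.Icc ((θ₁+1 : ℕ):ℝ) ((θ₂:ℕ):ℝ)) := by
    intro x hx y hy hxy
    have hx0 : (0:ℝ) ≤ x := le_trans (by positivity) hx.1
    simp only [hf]
    have : ((3*π/2)*x) ^ ((2:ℝ)/3) ≤ ((3*π/2)*y) ^ ((2:ℝ)/3) :=
      rpow_le_rpow (by positivity) (by nlinarith) (by norm_num)
    linarith
  have hsum := AntitoneOn.integral_le_sum_Ico (by omega : θ₁+1 ≤ θ₂) hanti
  refine le_trans ?_ (le_trans hsum (le_of_eq (by simp [hf])))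
  -- compute the integral
  set t1 : ℝ := ((θ₁+1:ℕ):ℝ) with ht1
  set T : ℝ := ((θ₂:ℕ):ℝ) with hT
  have ht10 : (0:ℝ) < t1 := by rw [ht1]; push_cast; positivity
  have ht1T : t1 ≤ T := by
    rw [ht1, hT]; exact_mod_cast (by omega : θ₁+1 ≤ θ₂)
  set c : ℝ := (3*π/2) ^ ((2:ℝ)/3) with hc
  have hc0 : (0:ℝ) < c := by rw [hc]; positivity
  have hceq : ∫ x in t1..T, f x = s*(T - t1) - c * ((T^((5:ℝ)/3) - t1^((5:ℝ)/3))/((5:ℝ)/3)) := by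
    have hcongr : ∫ x in t1..T, f x = ∫ x in t1..T, (s - c * x ^ ((2:ℝ)/3)) := by
      apply intervalIntegral.integral_congr
      intro x hx
      rw [Set.uIcc_of_le ht1T] at hx
      have hx0 : (0:ℝ) ≤ x := le_trans ht10.le hx.1
      simp only [hf]
      rw [mul_rpow (by positivity) hx0, hc]
    rw [hcongr, intervalIntegral.integral_sub intervalIntegrable_const
      ((intervalIntegral.intervalIntegrable_rpow' (by norm_num)).const_mul c),
      intervalIntegral.integral_const, intervalIntegral.integral_const_mul,
      integral_rpow (Or.inl (by norm_num))]
    norm_num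
    ring
  rw [hceq]
  have hst1 : t1 = (θ₁:ℝ) + 1 := by rw [ht1]; push_cast; ring
  have hcN' : c * N ^ ((2:ℝ)/3) = s := by rw [hc]; exact hcN
  clear_value f t1 T c
  clear hsum hanti hceq hf hIcc hsle hsA hA hB hs hcN hc ht1 hT f
  -- remaining: pure real arithmetic
  have hTub : T ≤ (1 + 2*ε/3) * N := by linarith
  have hpow : (1 + 2*ε/3) ^ ((5:ℝ)/3) ≤ 1 + 2*ε := by
    calc (1 + 2*ε/3) ^ ((5:ℝ)/3) ≤ (1 + 2*ε/3) ^ ((2:ℝ)) :=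
          rpow_le_rpow_of_exponent_le (by linarith) (by norm_num)
    _ = (1 + 2*ε/3)^(2:ℕ) := by rw [rpow_two]
    _ ≤ 1 + 2*ε := by nlinarith
  have hT53 : T ^ ((5:ℝ)/3) ≤ (1 + 2*ε) * N ^ ((5:ℝ)/3) := by
    calc T ^ ((5:ℝ)/3) ≤ ((1 + 2*ε/3) * N) ^ ((5:ℝ)/3) :=
          rpow_le_rpow (by linarith) hTub (by norm_num)
    _ = (1 + 2*ε/3) ^ ((5:ℝ)/3) * N ^ ((5:ℝ)/3) := mul_rpow (by linarith) hN0.le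
    _ ≤ (1 + 2*ε) * N ^ ((5:ℝ)/3) :=
        mul_le_mul_of_nonneg_right hpow (by positivity)
  have ht153 : (0:ℝ) ≤ c * t1 ^ ((5:ℝ)/3) := by positivity
  have hcN53 : c * N ^ ((5:ℝ)/3) = s * N := by rw [hN53, ← mul_assoc, hcN']
  have hmain : 4/(15*π) * s ^ ((5:ℝ)/2) * (1 - 3*ε) ≤ s*T - (3/5) * (c * T ^ ((5:ℝ)/3)) := by
    have h1 : s*N ≤ s*T := by nlinarith [hTlow, hs0]
    have h2 : c * T ^ ((5:ℝ)/3) ≤ (1+2*ε) * (s*N) := by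
      rw [← hcN53]
      calc c * T ^ ((5:ℝ)/3) ≤ c * ((1 + 2*ε) * N ^ ((5:ℝ)/3)) :=
            mul_le_mul_of_nonneg_left hT53 hc0.le
      _ = (1+2*ε) * (c * N ^ ((5:ℝ)/3)) := by ring
    have h3 : s*N * (2/5 - (6/5)*ε) ≤ s*T - (3/5) * (c * T ^ ((5:ℝ)/3)) := by nlinarith
    refine le_trans (le_of_eq ?_) h3
    rw [hsN]
    field_simp
    ring
  have hst1s : t1 * s = ((θ₁:ℝ)+1) * s := by rw [hst1]
  linarith [hmain, ht153, hst1s]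
end

section
/- Fix ε ∈ (0, 1/3). There exists x₀ = x₀(ε) > 0 such that for all x ≥ x₀, setting θ₂' := ⌈ 2 x^{3/2}/(3π (1−ε)^{3/2}) + 1/2 ⌉, one has ∫_{1/2}^{θ₂'} ( x − (1−ε) ((3π/2)(z − 1/2))^{2/3} ) dz ≤ (4/(15π)) x^{5/2} (1 + 3ε) + (3/2) x. -/
open Real MeasureTheory

/-!
After the substitution `u = (3π/2)(z - 1/2)` the integrand becomes `x - (1-ε) u^(2/3)`, which
vanishes at `R = (x/(1-ε))^(3/2)` and is negative beyond it; the upper limit `θ₂'` lies past this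
root, so the integral is at most the integral over `[0, R]`, which equals
`(2/5) x R · 2/(3π) = 4/(15π) x^(5/2) (1-ε)^(-3/2)`.
-/

theorem intervalIntegral.integral_le_of_nonpos_on_Icc {f : ℝ → ℝ} {a b c : ℝ} (hbc : b ≤ c)
    (hfab : IntervalIntegrable f volume a b) (hfbc : IntervalIntegrable f volume b c)
    (hnonpos : ∀ z ∈ Set.Icc b c, f z ≤ 0) :
    ∫ z in a..c, f z ≤ ∫ z in a..b, f z := by
  have : ∫ z in b..c, f z ≤ 0 := by
    simpa using intervalIntegral.integral_mono_on hbc hfbc intervalIntegrable_const hnonpos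
  linarith [intervalIntegral.integral_add_adjacent_intervals hfab hfbc]

theorem integral_sub_mul_rpow_le {x k p S : ℝ} (hx : 0 ≤ x) (hk : 0 < k) (hp : 0 < p)
    (hS : (x / k) ^ p⁻¹ ≤ S) :
    ∫ u in (0 : ℝ)..S, (x - k * u ^ p) ≤ p / (p + 1) * x * (x / k) ^ p⁻¹ := by
  set R := (x / k) ^ p⁻¹
  have hR0 : 0 ≤ R := by positivity
  have hRp : R ^ p = x / k := by
    rw [← rpow_mul (by positivity), inv_mul_cancel₀ hp.ne', rpow_one]
  have hrpow : ∀ a b : ℝ, IntervalIntegrable (fun u => u ^ p) volume a b := fun _ _ =>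
    intervalIntegral.intervalIntegrable_rpow' (by linarith)
  calc ∫ u in (0 : ℝ)..S, (x - k * u ^ p)
      ≤ ∫ u in (0 : ℝ)..R, (x - k * u ^ p) := by
        refine intervalIntegral.integral_le_of_nonpos_on_Icc hS
          (intervalIntegrable_const.sub ((hrpow _ _).const_mul k))
          (intervalIntegrable_const.sub ((hrpow _ _).const_mul k)) fun u hu => ?_
        have : x / k ≤ u ^ p := hRp ▸ rpow_le_rpow hR0 hu.1 hp.le
        rw [div_le_iff₀ hk] at this
        linarith
    _ = x * R - k * (R ^ (p + 1) / (p + 1)) := by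
        rw [intervalIntegral.integral_sub intervalIntegrable_const ((hrpow _ _).const_mul k),
          intervalIntegral.integral_const_mul, integral_rpow (Or.inl (by linarith))]
        simp [zero_rpow (by linarith : p + 1 ≠ 0), mul_comm]
    _ = p / (p + 1) * x * R := by
        rw [rpow_add_one' hR0 (by linarith), hRp]
        field_simp
        ring

theorem integral_sub_mul_rpow_comp_le {x k p a b T : ℝ} (hx : 0 ≤ x) (hk : 0 < k) (hp : 0 < p)
    (ha : 0 < a) (hT : b + (x / k) ^ p⁻¹ / a ≤ T) :
    ∫ z in b..T, (x - k * (a * (z - b)) ^ p) ≤ p / (p + 1) * x * (x / k) ^ p⁻¹ / a := by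
  rw [intervalIntegral.integral_comp_sub_right (fun y => x - k * (a * y) ^ p),
    intervalIntegral.integral_comp_mul_left (fun u => x - k * u ^ p) ha.ne', smul_eq_mul,
    sub_self, mul_zero, inv_mul_eq_div]
  gcongr
  refine integral_sub_mul_rpow_le hx hk hp ?_
  rw [← div_le_iff₀' ha]
  linarith

theorem inv_one_sub_rpow_three_halves_le {ε : ℝ} (h0 : 0 ≤ ε) (h1 : ε ≤ 1 / 3) :
    ((1 - ε) ^ ((3 : ℝ) / 2))⁻¹ ≤ 1 + 3 * ε := by
  have hpos : 0 < (1 - ε) ^ ((3 : ℝ) / 2) := by apply rpow_pos_of_pos; linarith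
  have hsq : ((1 - ε) ^ ((3 : ℝ) / 2)) ^ 2 = (1 - ε) ^ 3 := by
    rw [← rpow_natCast, ← rpow_mul (by linarith)]
    norm_num
  rw [inv_le_iff_one_le_mul₀ hpos]
  have : 1 ≤ ((1 - ε) ^ ((3 : ℝ) / 2) * (1 + 3 * ε)) ^ 2 := by
    rw [mul_pow, hsq]
    nlinarith [mul_nonneg (mul_nonneg h0 h0) (sub_nonneg.2 h1)]
  nlinarith [mul_pos hpos (by linarith : (0 : ℝ) < 1 + 3 * ε)]

/-- eq. Int1Bound: fix `ε ∈ (0,1/3)`. There exists `x₀ > 0` such that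
for all `x ≥ x₀`, with `θ₂' := ⌈2 x^(3/2)/(3π(1−ε)^(3/2)) + 1/2⌉`,
`∫_{1/2}^{θ₂'} (x − (1−ε)((3π/2)(z − 1/2))^(2/3)) dz ≤ (4/(15π)) x^(5/2)(1+3ε) + (3/2)x`. -/
theorem int1_bound (ε : ℝ) (hε : ε ∈ Set.Ioo (0 : ℝ) (1 / 3)) :
    ∃ x₀ > (0 : ℝ), ∀ x ≥ x₀,
      (∫ z in Set.Icc (1 / 2 : ℝ)
          ((⌈2 * x ^ ((3 : ℝ) / 2) / (3 * π * (1 - ε) ^ ((3 : ℝ) / 2)) + 1 / 2⌉₊ : ℝ)),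
          (x - (1 - ε) * ((3 * π / 2) * (z - 1 / 2)) ^ ((2 : ℝ) / 3))) ≤
        (4 / (15 * π)) * x ^ ((5 : ℝ) / 2) * (1 + 3 * ε) + (3 / 2) * x := by
  obtain ⟨hε0, hε3⟩ := hε
  refine ⟨1, one_pos, fun x hx => ?_⟩
  have hx0 : 0 ≤ x := by linarith
  have hk : 0 < 1 - ε := by linarith
  have hexp : ((2 : ℝ) / 3)⁻¹ = 3 / 2 := by norm_num
  set L := 2 * x ^ ((3 : ℝ) / 2) / (3 * π * (1 - ε) ^ ((3 : ℝ) / 2)) with hL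
  have hroot : (x / (1 - ε)) ^ ((2 : ℝ) / 3)⁻¹ / (3 * π / 2) = L := by
    rw [hL, hexp, div_rpow hx0 hk.le]
    field_simp
  have hT : L + 1 / 2 ≤ ⌈L + 1 / 2⌉₊ := Nat.le_ceil _
  rw [integral_Icc_eq_integral_Ioc,
    ← intervalIntegral.integral_of_le (by linarith [show 0 ≤ L by positivity])]
  calc _ ≤ 2 / 3 / (2 / 3 + 1) * x * (x / (1 - ε)) ^ ((2 : ℝ) / 3)⁻¹ / (3 * π / 2) :=
        integral_sub_mul_rpow_comp_le hx0 hk (by norm_num) (by positivity) (by linarith)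
    _ = 4 / (15 * π) * x ^ ((5 : ℝ) / 2) * ((1 - ε) ^ ((3 : ℝ) / 2))⁻¹ := by
        rw [hexp, div_rpow hx0 hk.le, show (5 : ℝ) / 2 = 1 + 3 / 2 by norm_num,
          rpow_add' hx0 (by norm_num), rpow_one]
        field_simp
        ring
    _ ≤ 4 / (15 * π) * x ^ ((5 : ℝ) / 2) * (1 + 3 * ε) := by
        gcongr
        exact inv_one_sub_rpow_three_halves_le hε0.le hε3.le
    _ ≤ _ := by linarith
end

section
/- Fix ε ∈ (0, 1/3) and T > 0. There exists x₀ = x₀(ε) > 0 such that for all x ≥ x₀, setting θ₂' := ⌈ 2 x^{3/2}/(3π (1−ε)^{3/2}) + 1/2 ⌉ and f(z) := x − (1−ε) ((3π/2)(z − 1/2))^{2/3}, one has ∑_{k=θ₂'}^{∞} exp( T^{1/3} f(k) ) ≤ √(2/π) x^{3/4}/(1−ε)^{3/4} + 4/(T π (1−ε)^3) + 3. -/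
/-!
Write `η = 1 - ε` and `A = x^{3/2} / η^{3/2}`, so that `x = η A^{2/3}` and the `k`-th term is
`exp (-T^{1/3} η (m^{2/3} - A^{2/3}))` with `m = (3π/2)(k - 1/2) ≥ A + (3π/2)(k - θ₂')`.
Every term is at most `1`. Once `m - A ≥ √A + 1`, comparing cube roots gives
`m^{2/3} - A^{2/3} ≥ (m - A)^{1/3} / 2`, so from then on the terms are dominated by the summable
sequence `exp (-(T^{1/3} η / 2) j^{1/3})`, whose sum `C` does not depend on `x`. The tail is thus at
most `(√A + 1)/4 + 1 + C`, and `C ≤ √A / 4 = x^{3/4} / (4 η^{3/4})` for large `x`.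
-/

open Real Filter

lemma sq_add_half_le_sq_of_cube_eq_add_cube {u v w : ℝ} (hu : 0 ≤ u) (hv : 0 ≤ v) (hw : 0 < w)
    (hcube : w ^ 3 = u ^ 3 + v ^ 3) (hwv : w ≤ v ^ 2) : u ^ 2 + v / 2 ≤ w ^ 2 := by
  have huw : u ≤ w := by
    by_contra! h
    nlinarith [pow_lt_pow_left₀ h hw.le (by norm_num : (3 : ℕ) ≠ 0), pow_nonneg hv 3]
  have hvw : v * w ≤ v ^ 3 := by nlinarith
  -- `v³ = (w - u)(w² + wu + u²) ≤ 2w(w² - u²)`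
  have key : v ^ 3 ≤ 2 * w * (w ^ 2 - u ^ 2) := by nlinarith [mul_nonneg (sub_nonneg.2 huw) hu]
  nlinarith

lemma rpow_two_thirds_add_half_rpow_one_third_le {A y : ℝ} (hA : 0 ≤ A) (hy : 0 < y)
    (hAy : A + y ≤ y ^ 2) : A ^ (2 / 3 : ℝ) + y ^ (1 / 3 : ℝ) / 2 ≤ (A + y) ^ (2 / 3 : ℝ) := by
  have cube {t : ℝ} (ht : 0 ≤ t) : (t ^ (1 / 3 : ℝ)) ^ 3 = t := by
    rw [← rpow_mul_natCast ht]; norm_num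
  have two_thirds {t : ℝ} (ht : 0 ≤ t) : t ^ (2 / 3 : ℝ) = (t ^ (1 / 3 : ℝ)) ^ 2 := by
    rw [← rpow_mul_natCast ht]; norm_num
  have hAy0 : 0 ≤ A + y := by positivity
  rw [two_thirds hA, two_thirds hAy0]
  refine sq_add_half_le_sq_of_cube_eq_add_cube (by positivity) (by positivity) (by positivity)
    (by rw [cube hA, cube hy.le, cube hAy0]) ?_
  calc (A + y) ^ (1 / 3 : ℝ) ≤ (y ^ 2) ^ (1 / 3 : ℝ) := rpow_le_rpow hAy0 hAy (by norm_num)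
    _ = (y ^ (1 / 3 : ℝ)) ^ 2 := by
      rw [← rpow_natCast_mul hy.le, ← rpow_mul_natCast hy.le]; norm_num

lemma add_le_sq_of_sqrt_add_one_le {A y : ℝ} (hA : 0 ≤ A) (hy : √A + 1 ≤ y) : A + y ≤ y ^ 2 := by
  nlinarith [sq_sqrt hA, sqrt_nonneg A]

lemma summable_exp_neg_mul_rpow {c p : ℝ} (hc : 0 < c) (hp : 0 < p) :
    Summable fun j : ℕ => exp (-c * (j : ℝ) ^ p) := by
  have hlim : Tendsto (fun j : ℕ => (j : ℝ) ^ p) atTop atTop :=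
    (tendsto_rpow_atTop hp).comp tendsto_natCast_atTop_atTop
  have hO := ((isLittleO_exp_neg_mul_rpow_atTop hc (-2 / p)).comp_tendsto hlim).isBigO
  refine summable_of_isBigO_nat ?_ hO
  refine (summable_nat_rpow.2 (show (-2 : ℝ) < -1 by norm_num)).congr fun j => ?_
  simp only [Function.comp, ← rpow_mul (Nat.cast_nonneg j)]
  field_simp

lemma ite_le_eq_zero_of_notMem_range_add (f : ℕ → ℝ) (n : ℕ) :
    ∀ k ∉ Set.range (· + n), (if n ≤ k then f k else 0) = 0 :=
  fun k hk => if_neg fun hnk => hk ⟨k - n, Nat.sub_add_cancel hnk⟩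

lemma summable_ite_le_iff (f : ℕ → ℝ) (n : ℕ) :
    Summable (fun k => if n ≤ k then f k else 0) ↔ Summable fun j => f (j + n) := by
  rw [← (add_left_injective n).summable_iff (ite_le_eq_zero_of_notMem_range_add f n)]
  simp only [Function.comp_def, Nat.le_add_left, if_true]

lemma tsum_ite_le (f : ℕ → ℝ) (n : ℕ) :
    ∑' k, (if n ≤ k then f k else 0) = ∑' j, f (j + n) := by
  rw [← (add_left_injective n).tsum_eq]
  · simp only [Nat.le_add_left, if_true]
  · intro k hk
    by_contra h
    exact hk (ite_le_eq_zero_of_notMem_range_add f n k h)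

lemma summable_and_tsum_le_of_le_one_of_le {F g : ℕ → ℝ} {N : ℕ} (hF : ∀ j, 0 ≤ F j)
    (hF1 : ∀ j < N, F j ≤ 1) (hFg : ∀ j, N ≤ j → F j ≤ g j) (hg0 : ∀ j, 0 ≤ g j)
    (hg : Summable g) : Summable F ∧ ∑' j, F j ≤ N + ∑' j, g j := by
  have hFg' (j : ℕ) : F (j + N) ≤ g (j + N) := hFg _ (Nat.le_add_left N j)
  have hgN : Summable fun j => g (j + N) := (summable_nat_add_iff N).2 hg
  have hFN : Summable fun j => F (j + N) := hgN.of_nonneg_of_le (fun j => hF _) hFg'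
  have hFsum : Summable F := (summable_nat_add_iff N).1 hFN
  refine ⟨hFsum, ?_⟩
  rw [← hFsum.sum_add_tsum_nat_add N, ← hg.sum_add_tsum_nat_add N]
  have hhead : ∑ j ∈ Finset.range N, F j ≤ N := by
    simpa using Finset.sum_le_card_nsmul _ _ 1 fun j hj => hF1 j (Finset.mem_range.1 hj)
  have htail : ∑' j, F (j + N) ≤ ∑' j, g (j + N) := hFN.tsum_le_tsum hFg' hgN
  have hghead : 0 ≤ ∑ j ∈ Finset.range N, g j := Finset.sum_nonneg fun j _ => hg0 j
  linarith

section TailTerms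

variable {a η A x : ℝ}

lemma exp_mul_sub_rpow_two_thirds_le_one {m : ℝ} (ha : 0 ≤ a) (hη : 0 ≤ η) (hA : 0 ≤ A)
    (hxA : η * A ^ (2 / 3 : ℝ) = x) (hAm : A ≤ m) :
    exp (a * (x - η * m ^ (2 / 3 : ℝ))) ≤ 1 := by
  have := rpow_le_rpow hA hAm (by norm_num : (0 : ℝ) ≤ 2 / 3)
  rw [exp_le_one_iff, ← hxA]
  exact mul_nonpos_of_nonneg_of_nonpos ha (by nlinarith)

lemma exp_mul_sub_rpow_two_thirds_le {m : ℝ} (ha : 0 ≤ a) (hη : 0 ≤ η) (hA : 0 ≤ A)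
    (hxA : η * A ^ (2 / 3 : ℝ) = x) (hgap : √A + 1 ≤ m - A) :
    exp (a * (x - η * m ^ (2 / 3 : ℝ))) ≤ exp (-(a * η / 2) * (m - A) ^ (1 / 3 : ℝ)) := by
  have hy : 0 < m - A := by linarith [sqrt_nonneg A]
  have := rpow_two_thirds_add_half_rpow_one_third_le hA hy (add_le_sq_of_sqrt_add_one_le hA hgap)
  rw [add_sub_cancel] at this
  rw [exp_le_exp, ← hxA]
  nlinarith [mul_le_mul_of_nonneg_left this (mul_nonneg ha hη)]

theorem summable_and_tsum_exp_mul_sub_rpow_two_thirds_le {s : ℝ} {m : ℕ → ℝ} (ha : 0 < a)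
    (hη : 0 < η) (hA : 0 ≤ A) (hxA : η * A ^ (2 / 3 : ℝ) = x) (hs : 1 ≤ s)
    (hm : ∀ j : ℕ, A + s * j ≤ m j) :
    Summable (fun j => exp (a * (x - η * m j ^ (2 / 3 : ℝ)))) ∧
      ∑' j, exp (a * (x - η * m j ^ (2 / 3 : ℝ))) ≤
        ⌈(√A + 1) / s⌉₊ + ∑' j : ℕ, exp (-(a * η / 2) * (j : ℝ) ^ (1 / 3 : ℝ)) := by
  refine summable_and_tsum_le_of_le_one_of_le (fun j => (exp_pos _).le)
    (fun j _ => exp_mul_sub_rpow_two_thirds_le_one ha.le hη.le hA hxA ?_) (fun j hj => ?_)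
    (fun j => (exp_pos _).le) (summable_exp_neg_mul_rpow (by positivity) (by norm_num))
  · nlinarith [hm j, (Nat.cast_nonneg j : (0 : ℝ) ≤ j)]
  · have hsj : √A + 1 ≤ s * j := by
      rw [mul_comm, ← div_le_iff₀ (by linarith)]
      exact Nat.ceil_le.1 hj
    have hjm : (j : ℝ) ≤ m j - A := by nlinarith [hm j, (Nat.cast_nonneg j : (0 : ℝ) ≤ j)]
    refine (exp_mul_sub_rpow_two_thirds_le ha.le hη.le hA hxA (by linarith [hm j])).trans ?_
    rw [exp_le_exp, neg_mul, neg_mul, neg_le_neg_iff]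
    exact mul_le_mul_of_nonneg_left (rpow_le_rpow (Nat.cast_nonneg j) hjm (by norm_num))
      (by positivity)

end TailTerms

section ThreeHalvesScaling

variable {x η : ℝ}

lemma mul_div_rpow_three_halves_rpow_two_thirds (hx : 0 < x) (hη : 0 < η) :
    η * (x ^ (3 / 2 : ℝ) / η ^ (3 / 2 : ℝ)) ^ (2 / 3 : ℝ) = x := by
  rw [div_rpow (by positivity) (by positivity), ← rpow_mul hx.le, ← rpow_mul hη.le]
  norm_num
  field_simp

lemma sqrt_div_rpow_three_halves (hx : 0 < x) (hη : 0 < η) :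
    √(x ^ (3 / 2 : ℝ) / η ^ (3 / 2 : ℝ)) = x ^ (3 / 4 : ℝ) / η ^ (3 / 4 : ℝ) := by
  rw [sqrt_eq_rpow, div_rpow (by positivity) (by positivity), ← rpow_mul hx.le,
    ← rpow_mul hη.le]
  norm_num

lemma le_rpow_div_rpow_of_rpow_inv_le {c p : ℝ} (hc : 0 ≤ c) (hp : 0 < p) (hη : 0 < η)
    (hη1 : η ≤ 1) (hx : c ^ p⁻¹ ≤ x) : c ≤ x ^ p / η ^ p := by
  have hcx : c ≤ x ^ p := by
    rw [← rpow_inv_rpow hc hp.ne']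
    exact rpow_le_rpow (by positivity) hx hp.le
  rw [le_div_iff₀ (by positivity)]
  exact (mul_le_of_le_one_right hc (rpow_le_one hη.le hη1 hp.le)).trans hcx

end ThreeHalvesScaling

lemma natCeil_div_add_le_sqrt_two_div_pi_mul_add_three {P C s : ℝ} (hP : 0 ≤ P)
    (hCP : 4 * C ≤ P) (hs : 4 ≤ s) : ⌈(P + 1) / s⌉₊ + C ≤ √(2 / π) * P + 3 := by
  have hN : (⌈(P + 1) / s⌉₊ : ℝ) ≤ (P + 1) / 4 + 1 := by
    refine (Nat.ceil_lt_add_one (by positivity)).le.trans ?_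
    gcongr
  have hpi : 1 / 2 ≤ √(2 / π) := by
    rw [le_sqrt (by norm_num) (by positivity), le_div_iff₀ pi_pos]
    linarith [pi_le_four]
  nlinarith

/-- eq. TailSecUpperBound: fix `ε ∈ (0,1/3)` and `T > 0`. There exists
`x₀ > 0` such that for all `x ≥ x₀`, with `θ₂' := ⌈2 x^(3/2)/(3π(1−ε)^(3/2)) + 1/2⌉` and
`f(z) := x − (1−ε)((3π/2)(z − 1/2))^(2/3)`, the sum over integers `k ≥ θ₂'` of
`exp(T^(1/3) f(k))` is at most `√(2/π) x^(3/4)/(1−ε)^(3/4) + 4/(Tπ(1−ε)^3) + 3`. -/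
theorem tail_section_upper_bound (ε T : ℝ) (hε : ε ∈ Set.Ioo (0 : ℝ) (1 / 3)) (hT : 0 < T) :
    ∃ x₀ > (0 : ℝ), ∀ x ≥ x₀,
      Summable (fun k : ℕ =>
        if ⌈2 * x ^ ((3 : ℝ) / 2) / (3 * π * (1 - ε) ^ ((3 : ℝ) / 2)) + 1 / 2⌉₊ ≤ k then
          Real.exp (T ^ ((1 : ℝ) / 3) *
            (x - (1 - ε) * ((3 * π / 2) * ((k : ℝ) - 1 / 2)) ^ ((2 : ℝ) / 3)))
        else 0) ∧
      (∑' k : ℕ,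
        if ⌈2 * x ^ ((3 : ℝ) / 2) / (3 * π * (1 - ε) ^ ((3 : ℝ) / 2)) + 1 / 2⌉₊ ≤ k then
          Real.exp (T ^ ((1 : ℝ) / 3) *
            (x - (1 - ε) * ((3 * π / 2) * ((k : ℝ) - 1 / 2)) ^ ((2 : ℝ) / 3)))
        else 0) ≤
        Real.sqrt (2 / π) * x ^ ((3 : ℝ) / 4) / (1 - ε) ^ ((3 : ℝ) / 4) +
          4 / (T * π * (1 - ε) ^ 3) + 3 := by
  obtain ⟨hε0, hε1⟩ := hε
  have hη : 0 < 1 - ε := by linarith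
  set C := ∑' j : ℕ, exp (-(T ^ ((1 : ℝ) / 3) * (1 - ε) / 2) * (j : ℝ) ^ (1 / 3 : ℝ)) with hC_def
  have hC : 0 ≤ C := tsum_nonneg fun j => (exp_pos _).le
  refine ⟨(4 * C + 1) ^ (3 / 4 : ℝ)⁻¹, by positivity, fun x hx => ?_⟩
  have hx0 : 0 < x := lt_of_lt_of_le (by positivity) hx
  set D := 2 * x ^ ((3 : ℝ) / 2) / (3 * π * (1 - ε) ^ ((3 : ℝ) / 2)) with hD
  set A := x ^ ((3 : ℝ) / 2) / (1 - ε) ^ ((3 : ℝ) / 2) with hA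
  have hDA : 3 * π / 2 * D = A := by rw [hD, hA]; field_simp
  have hm (j : ℕ) : A + 3 * π / 2 * j ≤ 3 * π / 2 * (((j + ⌈D + 1 / 2⌉₊ : ℕ) : ℝ) - 1 / 2) := by
    have := Nat.le_ceil (D + 1 / 2)
    rw [← hDA]; push_cast; nlinarith [pi_pos]
  obtain ⟨hsum, hle⟩ := summable_and_tsum_exp_mul_sub_rpow_two_thirds_le (rpow_pos_of_pos hT _)
    hη (by positivity) (mul_div_rpow_three_halves_rpow_two_thirds hx0 hη)
    (by linarith [pi_gt_three]) hm
  rw [summable_ite_le_iff, tsum_ite_le]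
  refine ⟨hsum, hle.trans ?_⟩
  have hCA : 4 * C + 1 ≤ √A := by
    rw [hA, sqrt_div_rpow_three_halves hx0 hη]
    exact le_rpow_div_rpow_of_rpow_inv_le (by positivity) (by norm_num) hη (by linarith) hx
  have := natCeil_div_add_le_sqrt_two_div_pi_mul_add_three (sqrt_nonneg A) (by linarith : 4 * C ≤ √A)
    (by linarith [pi_gt_three] : (4 : ℝ) ≤ 3 * π / 2)
  rw [← hC_def, mul_div_assoc (√(2 / π)), ← sqrt_div_rpow_three_halves hx0 hη]
  have : 0 ≤ 4 / (T * π * (1 - ε) ^ 3) := by positivity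
  linarith
end

section
/- Fix ε ∈ (0, 1) and U > 0. Let B : [0, ∞) → ℝ be continuous and set B̄_x := ∫_x^{x+1} B(y) dy. Assume that for all x ≥ 0, |B(x+1) − B(x)| ≤ 6 (U + ε x) and |B̄_x − B(x)| ≤ 6 √(U + ε² x). Then for every continuously differentiable f : ℝ → ℝ with compact support contained in [0, ∞), | ∫_0^∞ f(x)² (B(x+1) − B(x)) dx + ∫_0^∞ f(x) f'(x) (B̄_x − B(x)) dx | ≤ 6 (1 + 1/(2ε)) U ∫_0^∞ f(x)² dx + 10 ε ∫_0^∞ ( f'(x)² + x f(x)² ) dx. -/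
/-!
Both integrands are bounded pointwise on `[0, ∞)`. The increment term is at most
`6 (U + ε x) f²`. For the mean term, Young's inequality
`|f f' c| ≤ 3ε f'² + f² c² / (12ε)` together with `c² ≤ 36 (U + ε² x)` gives at most
`3ε f'² + (3U/ε + 3εx) f²`. The two bounds add up to `(6 + 3/ε) U f² + 3ε f'² + 9εx f²`,
which is below the claimed integrand `6 (1 + 1/(2ε)) U f² + 10ε (f'² + x f²)`.
-/

open MeasureTheory Set

section

variable {X : Type*} [TopologicalSpace X] [MeasurableSpace X] [OpensMeasurableSpace X]
  {μ : Measure X} [IsFiniteMeasureOnCompacts μ]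

theorem Continuous.integrable_mul_sq_of_hasCompactSupport {g u : X → ℝ} (hg : Continuous g)
    (hu : Continuous u) (huc : HasCompactSupport u) :
    Integrable (fun x => g x * u x ^ 2) μ :=
  (hg.mul (hu.pow 2)).integrable_of_hasCompactSupport <| by
    simpa only [sq] using (huc.mul_left (f := u)).mul_left (f := g)

theorem Continuous.integrable_sq_of_hasCompactSupport {u : X → ℝ} (hu : Continuous u)
    (huc : HasCompactSupport u) : Integrable (fun x => u x ^ 2) μ := by
  simpa only [one_mul] using
    continuous_const.integrable_mul_sq_of_hasCompactSupport hu huc (g := fun _ => 1) (μ := μ)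

end

theorem abs_integral_add_integral_le {α : Type*} [MeasurableSpace α] {μ : Measure α}
    {F G g₁ g₂ : α → ℝ} (hg₁ : Integrable g₁ μ) (hg₂ : Integrable g₂ μ)
    (hF : ∀ᵐ x ∂μ, |F x| ≤ g₁ x) (hG : ∀ᵐ x ∂μ, |G x| ≤ g₂ x) :
    |∫ x, F x ∂μ + ∫ x, G x ∂μ| ≤ ∫ x, g₁ x + g₂ x ∂μ :=
  calc |∫ x, F x ∂μ + ∫ x, G x ∂μ| ≤ |∫ x, F x ∂μ| + |∫ x, G x ∂μ| := abs_add_le _ _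
    _ ≤ ∫ x, g₁ x ∂μ + ∫ x, g₂ x ∂μ :=
      add_le_add (norm_integral_le_of_norm_le (f := F) hg₁ hF)
        (norm_integral_le_of_norm_le (f := G) hg₂ hG)
    _ = ∫ x, g₁ x + g₂ x ∂μ := (integral_add hg₁ hg₂).symm

theorem abs_mul_le_mul_sq_add_sq_div {a b δ : ℝ} (hδ : 0 < δ) :
    |a * b| ≤ δ * a ^ 2 + b ^ 2 / (4 * δ) := by
  rw [abs_mul, ← sq_abs a, ← sq_abs b, add_div' _ _ _ (by positivity), le_div_iff₀ (by positivity)]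
  nlinarith [sq_nonneg (2 * δ * |a| - |b|)]

theorem abs_mul_mul_le_of_abs_le_sqrt {a b c s ε : ℝ} (hε : 0 < ε) (hs : 0 ≤ s)
    (hc : |c| ≤ 6 * √s) : |a * b * c| ≤ 3 * ε * b ^ 2 + 3 * s / ε * a ^ 2 := by
  have hc2 : c ^ 2 ≤ 36 * s := by
    have := pow_le_pow_left₀ (abs_nonneg c) hc 2
    rw [sq_abs, mul_pow, Real.sq_sqrt hs] at this
    linarith
  calc |a * b * c| = |b * (a * c)| := by ring_nf
    _ ≤ 3 * ε * b ^ 2 + (a * c) ^ 2 / (4 * (3 * ε)) := abs_mul_le_mul_sq_add_sq_div (by positivity)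
    _ ≤ 3 * ε * b ^ 2 + 3 * s / ε * a ^ 2 := by
      have : (a * c) ^ 2 / (4 * (3 * ε)) ≤ 3 * s / ε * a ^ 2 := by
        rw [div_mul_eq_mul_div, div_le_div_iff₀ (by positivity) hε]
        nlinarith [mul_le_mul_of_nonneg_left hc2 (sq_nonneg a)]
      linarith

theorem quadratic_form_bound_general (ε U : ℝ) (hε : ε ∈ Set.Ioo (0 : ℝ) 1) (hU : 0 < U)
    (B : ℝ → ℝ)
    (hB1 : ∀ x ≥ (0 : ℝ), |B (x + 1) - B x| ≤ 6 * (U + ε * x))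
    (hB2 : ∀ x ≥ (0 : ℝ), |(∫ y in x..(x + 1), B y) - B x| ≤ 6 * Real.sqrt (U + ε ^ 2 * x))
    (f : ℝ → ℝ) (hf : ContDiff ℝ 1 f) (hfc : HasCompactSupport f) :
    |(∫ x in Set.Ici (0 : ℝ), (f x) ^ 2 * (B (x + 1) - B x)) +
        ∫ x in Set.Ici (0 : ℝ), f x * deriv f x * ((∫ y in x..(x + 1), B y) - B x)| ≤
      6 * (1 + 1 / (2 * ε)) * U * (∫ x in Set.Ici (0 : ℝ), (f x) ^ 2) +
        10 * ε * ∫ x in Set.Ici (0 : ℝ), ((deriv f x) ^ 2 + x * (f x) ^ 2) := by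
  obtain ⟨hε0, -⟩ := hε
  have hf₀ : Continuous f := hf.continuous
  have hf₁ : Continuous (deriv f) := hf.continuous_deriv le_rfl
  have hfc₁ : HasCompactSupport (deriv f) := hfc.deriv
  have hP : Integrable (fun x => f x ^ 2) (volume.restrict (Ici 0)) :=
    hf₀.integrable_sq_of_hasCompactSupport hfc
  have hQ : Integrable (fun x => deriv f x ^ 2 + x * f x ^ 2) (volume.restrict (Ici 0)) :=
    (hf₁.integrable_sq_of_hasCompactSupport hfc₁).add
      (continuous_id.integrable_mul_sq_of_hasCompactSupport hf₀ hfc)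
  have hg₁ : Integrable (fun x => 6 * (U + ε * x) * f x ^ 2) (volume.restrict (Ici 0)) :=
    Continuous.integrable_mul_sq_of_hasCompactSupport (by fun_prop) hf₀ hfc
  have hg₂ : Integrable (fun x => 3 * ε * deriv f x ^ 2 + 3 * (U + ε ^ 2 * x) / ε * f x ^ 2)
      (volume.restrict (Ici 0)) :=
    (continuous_const.integrable_mul_sq_of_hasCompactSupport hf₁ hfc₁).add
      (Continuous.integrable_mul_sq_of_hasCompactSupport (by fun_prop) hf₀ hfc)
  calc _ ≤ ∫ x in Ici 0, 6 * (U + ε * x) * f x ^ 2 +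
        (3 * ε * deriv f x ^ 2 + 3 * (U + ε ^ 2 * x) / ε * f x ^ 2) := by
        refine abs_integral_add_integral_le hg₁ hg₂
          (ae_restrict_of_forall_mem measurableSet_Ici fun x (hx : 0 ≤ x) => ?_)
          (ae_restrict_of_forall_mem measurableSet_Ici fun x (hx : 0 ≤ x) => ?_)
        · rw [abs_mul, abs_sq, mul_comm]
          exact mul_le_mul_of_nonneg_right (hB1 x hx) (sq_nonneg _)
        · exact abs_mul_mul_le_of_abs_le_sqrt hε0 (by positivity) (hB2 x hx)
    _ ≤ ∫ x in Ici 0, 6 * (1 + 1 / (2 * ε)) * U * f x ^ 2 +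
        10 * ε * (deriv f x ^ 2 + x * f x ^ 2) := by
        refine setIntegral_mono_on (hg₁.add hg₂) ((hP.const_mul _).add (hQ.const_mul _))
          measurableSet_Ici fun x (hx : 0 ≤ x) => ?_
        have h₁ : 6 * (1 + 1 / (2 * ε)) * U = 6 * U + 3 * U / ε := by field_simp; ring
        have h₂ : 3 * (U + ε ^ 2 * x) / ε = 3 * U / ε + 3 * ε * x := by field_simp
        rw [h₁, h₂]
        nlinarith [mul_nonneg (mul_nonneg hε0.le hx) (sq_nonneg (f x)),
          mul_nonneg hε0.le (sq_nonneg (deriv f x))]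
    _ = _ := by
        rw [integral_add (hP.const_mul _) (hQ.const_mul _), integral_const_mul, integral_const_mul]

/-- eq. BoundBrownian, analytic core: fix `ε ∈ (0,1)` and `U > 0`.
Let `B : [0,∞) → ℝ` be continuous with `|B(x+1) − B(x)| ≤ 6(U + εx)` and
`|B̄_x − B(x)| ≤ 6√(U + ε²x)` for all `x ≥ 0`, where `B̄_x := ∫_x^{x+1} B(y) dy`. Then for
every continuously differentiable `f : ℝ → ℝ` with compact support contained in `[0,∞)`,
`|∫_0^∞ f²(B(·+1) − B) + ∫_0^∞ f f'(B̄ − B)| ≤ 6(1 + 1/(2ε)) U ∫_0^∞ f² +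
10ε ∫_0^∞ ((f')² + x f²)`. -/
theorem quadratic_form_bound (ε U : ℝ) (hε : ε ∈ Set.Ioo (0 : ℝ) 1) (hU : 0 < U)
    (B : ℝ → ℝ) (hB : ContinuousOn B (Set.Ici 0))
    (hB1 : ∀ x ≥ (0 : ℝ), |B (x + 1) - B x| ≤ 6 * (U + ε * x))
    (hB2 : ∀ x ≥ (0 : ℝ), |(∫ y in x..(x + 1), B y) - B x| ≤ 6 * Real.sqrt (U + ε ^ 2 * x))
    (f : ℝ → ℝ) (hf : ContDiff ℝ 1 f) (hfc : HasCompactSupport f)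
    (hfs : tsupport f ⊆ Set.Ici 0) :
    |(∫ x in Set.Ici (0 : ℝ), (f x) ^ 2 * (B (x + 1) - B x)) +
        ∫ x in Set.Ici (0 : ℝ), f x * deriv f x * ((∫ y in x..(x + 1), B y) - B x)| ≤
      6 * (1 + 1 / (2 * ε)) * U * (∫ x in Set.Ici (0 : ℝ), (f x) ^ 2) +
        10 * ε * ∫ x in Set.Ici (0 : ℝ), ((deriv f x) ^ 2 + x * (f x) ^ 2) :=
  quadratic_form_bound_general ε U hε hU B hB1 hB2 f hf hfc
end
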